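/- arXiv:1602.05535 — 3 statements merged into one kernel-verified Lean document; each statement's English description precedes it below -/
import Mathlib

section
/- For any finite poset P with n elements, the function ℓ ↦ |{weakly order-preserving maps P → {0,...,ℓ}}| is given by a polynomial in ℓ of degree n. -/
open Finset Polynomial

section Aux

variable {P : Type*} [PartialOrder P] [Fintype P]

private lemma exists_mono_surj_aux :
    ∃ g : P → Fin (Fintype.card P), Monotone g ∧ Function.Surjective g := by
  letI : Fintype (LinearExtension P) := ‹Fintype P›
  have hc : Fintype.card (LinearExtension P) = Fintype.card P := rfl
  let e := monoEquivOfFin (LinearExtension P) hc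
  refine ⟨fun p => e.symm (toLinearExtension p), ?_, ?_⟩
  · exact fun a b hab => e.symm.monotone (toLinearExtension.monotone hab)
  · intro i
    exact ⟨(e i : LinearExtension P), e.symm_apply_apply i⟩

private lemma key_count_aux (m : ℕ) :
    Nat.card {g : P → Fin m // Monotone g} =
      ∑ k ∈ Finset.range (Fintype.card P + 1),
        Nat.card {g : P → Fin k // Monotone g ∧ Function.Surjective g} * m.choose k := by
  classical
  set n := Fintype.card P with hn
  let T : Fin (n + 1) → Type _ := fun k =>
    {s : Finset (Fin m) // s.card = k} ×
      {g : P → Fin (k : ℕ) // Monotone g ∧ Function.Surjective g}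
  let Φ : (Σ k : Fin (n + 1), T k) → {g : P → Fin m // Monotone g} := fun x =>
    ⟨(x.2.1.1.orderEmbOfFin x.2.1.2) ∘ x.2.2.1,
      fun a b hab => (x.2.1.1.orderEmbOfFin x.2.1.2).monotone (x.2.2.2.1 hab)⟩
  have hbij : Function.Bijective Φ := by
    constructor
    · rintro ⟨k, ⟨s, hs⟩, ⟨g, hg, hgs⟩⟩ ⟨k', ⟨s', hs'⟩, ⟨g', hg', hgs'⟩⟩ h
      have h1 : (s.orderEmbOfFin hs) ∘ g = (s'.orderEmbOfFin hs') ∘ g' :=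
        congrArg Subtype.val h
      have e1 : Set.range ((s.orderEmbOfFin hs) ∘ g) = (s : Set (Fin m)) := by
        rw [Set.range_comp, hgs.range_eq, Set.image_univ, Finset.range_orderEmbOfFin]
      have e2 : Set.range ((s'.orderEmbOfFin hs') ∘ g') = (s' : Set (Fin m)) := by
        rw [Set.range_comp, hgs'.range_eq, Set.image_univ, Finset.range_orderEmbOfFin]
      have hss : s = s' := Finset.coe_injective (by rw [← e1, h1, e2])
      have hk : k = k' := by
        apply Fin.ext
        rw [← hs, ← hs', hss]
      subst hk
      subst hss
      have hg12 : g = g' := by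
        funext p
        apply (s.orderEmbOfFin hs).injective
        have := congrFun h1 p
        simpa using this
      subst hg12
      rfl
    · rintro ⟨f, hf⟩
      set s : Finset (Fin m) := Finset.image f Finset.univ with hsdef
      have hkle : s.card ≤ n := le_trans Finset.card_image_le (by simp [hn])
      refine ⟨⟨⟨s.card, Nat.lt_succ_of_le hkle⟩,
        ⟨s, rfl⟩,
        ⟨fun p => (s.orderIsoOfFin rfl).symm ⟨f p, Finset.mem_image_of_mem f (Finset.mem_univ p)⟩,
          ?_, ?_⟩⟩, ?_⟩
      · intro a b hab
        exact (s.orderIsoOfFin rfl).symm.monotone (Subtype.mk_le_mk.mpr (hf hab))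
      · intro i
        obtain ⟨p, _, hp⟩ := Finset.mem_image.mp ((s.orderIsoOfFin rfl i).2)
        refine ⟨p, ?_⟩
        have h2 : (⟨f p, Finset.mem_image_of_mem f (Finset.mem_univ p)⟩ : s) =
            s.orderIsoOfFin rfl i := Subtype.ext hp
        show (s.orderIsoOfFin rfl).symm ⟨f p, _⟩ = i
        rw [h2, OrderIso.symm_apply_apply]
      · apply Subtype.ext
        funext p
        simp only [Φ, Function.comp_apply]
        rw [← Finset.coe_orderIsoOfFin_apply, OrderIso.apply_symm_apply]
  have hcard := Nat.card_congr (Equiv.ofBijective Φ hbij)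
  rw [← hcard]
  rw [Nat.card_eq_fintype_card, Fintype.card_sigma]
  rw [← Fin.sum_univ_eq_sum_range
    (fun k => Nat.card {g : P → Fin k // Monotone g ∧ Function.Surjective g} * m.choose k) (n + 1)]
  congr 1
  funext k
  rw [Fintype.card_prod, Fintype.card_finset_len, Nat.card_eq_fintype_card, Fintype.card_fin]
  ring

end Aux

/-- For any finite poset `P` with `n` elements, the function
`ℓ ↦ #{weakly order-preserving maps P → {0,…,ℓ}}` is a polynomial in `ℓ` of degree `n`. -/
theorem stmt_3 (P : Type*) [PartialOrder P] [Fintype P] :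
    ∃ f : Polynomial ℚ, f.natDegree = Fintype.card P ∧
      ∀ ℓ : ℕ, f.eval (ℓ : ℚ) =
        (Nat.card {g : P → Fin (ℓ + 1) // Monotone g} : ℚ) := by
  classical
  set n := Fintype.card P with hn
  set c : ℕ → ℕ := fun k => Nat.card {g : P → Fin k // Monotone g ∧ Function.Surjective g}
    with hc
  set p : ℕ → Polynomial ℚ := fun k =>
    Polynomial.C ((c k : ℚ) / k.factorial) * ((descPochhammer ℚ k).comp (X + Polynomial.C 1))
    with hp
  have hmonic : ∀ k, ((descPochhammer ℚ k).comp (X + Polynomial.C 1)).Monic := fun k =>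
    (monic_descPochhammer ℚ k).comp_X_add_C 1
  have hdeg : ∀ k, ((descPochhammer ℚ k).comp (X + Polynomial.C 1)).natDegree = k := by
    intro k
    rw [natDegree_comp, descPochhammer_natDegree, natDegree_X_add_C, mul_one]
  have hdegp : ∀ k, (p k).natDegree ≤ k := by
    intro k
    refine le_trans natDegree_mul_le ?_
    rw [natDegree_C, hdeg k, zero_add]
  have hcn : 0 < c n := by
    obtain ⟨g, hg1, hg2⟩ := exists_mono_surj_aux (P := P)
    have : Nonempty {g : P → Fin n // Monotone g ∧ Function.Surjective g} := ⟨⟨g, hg1, hg2⟩⟩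
    exact Nat.card_pos
  refine ⟨∑ k ∈ Finset.range (n + 1), p k, ?_, ?_⟩
  · -- degree
    have hle : (∑ k ∈ Finset.range (n + 1), p k).natDegree ≤ n := by
      apply Polynomial.natDegree_sum_le_of_forall_le
      intro k hk
      exact le_trans (hdegp k) (Nat.lt_succ_iff.mp (Finset.mem_range.mp hk))
    have hcoeff : (∑ k ∈ Finset.range (n + 1), p k).coeff n = (c n : ℚ) / n.factorial := by
      rw [finset_sum_coeff, Finset.sum_range_succ]
      have h0 : ∀ k ∈ Finset.range n, (p k).coeff n = 0 := by
        intro k hk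
        apply coeff_eq_zero_of_natDegree_lt
        exact lt_of_le_of_lt (hdegp k) (Finset.mem_range.mp hk)
      rw [Finset.sum_eq_zero h0, zero_add]
      rw [hp]
      simp only [coeff_C_mul]
      have : ((descPochhammer ℚ n).comp (X + Polynomial.C 1)).coeff n = 1 := by
        have := (hmonic n).leadingCoeff
        rwa [leadingCoeff, hdeg n] at this
      rw [this, mul_one]
    have hne : (∑ k ∈ Finset.range (n + 1), p k).coeff n ≠ 0 := by
      rw [hcoeff]
      apply div_ne_zero
      · exact Nat.cast_ne_zero.mpr hcn.ne'
      · exact_mod_cast Nat.factorial_ne_zero n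
    exact le_antisymm hle (le_natDegree_of_ne_zero hne)
  · -- evaluation
    intro ℓ
    rw [key_count_aux (P := P) (ℓ + 1)]
    rw [eval_finset_sum]
    push_cast
    apply Finset.sum_congr rfl
    intro k _
    rw [hp]
    simp only [eval_mul, eval_C, eval_comp, eval_add, eval_X, eval_one]
    have : ((ℓ : ℚ) + 1) = ((ℓ + 1 : ℕ) : ℚ) := by push_cast; ring
    rw [this, descPochhammer_eval_eq_descFactorial ℚ (ℓ + 1) k,
      Nat.descFactorial_eq_factorial_mul_choose]
    have hk0 : (k.factorial : ℚ) ≠ 0 := by exact_mod_cast k.factorial_ne_zero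
    simp only [hc]
    push_cast
    field_simp
end

section
/- A permutation avoiding the pattern 321 is fully commutative: any two reduced words for it are connected by a sequence of commutation moves s_i s_j ↦ s_j s_i with |i−j| ≥ 2, without any braid moves s_i s_{i+1} s_i ↦ s_{i+1} s_i s_{i+1}. -/
/-- The adjacent transposition `s_i = (i, i+1)` in `S_n` (0-indexed letters). -/
def simpleT (n : ℕ) (i : {i : ℕ // i + 1 < n}) : Equiv.Perm (Fin n) :=
  Equiv.swap ⟨i.1, Nat.lt_of_succ_lt i.2⟩ ⟨i.1 + 1, i.2⟩

/-- The permutation given by a word in the simple transpositions. -/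
def wordProd (n : ℕ) (l : List {i : ℕ // i + 1 < n}) : Equiv.Perm (Fin n) :=
  (l.map (simpleT n)).prod

/-- `l` is a reduced word for `w`: its product is `w` and it has minimal length. -/
def IsReducedWord (n : ℕ) (w : Equiv.Perm (Fin n)) (l : List {i : ℕ // i + 1 < n}) : Prop :=
  wordProd n l = w ∧
    ∀ l' : List {i : ℕ // i + 1 < n}, wordProd n l' = w → l.length ≤ l'.length

/-- A single commutation move `s_i s_j ↦ s_j s_i` with `|i - j| ≥ 2`. -/
def CommMove (n : ℕ) (l₁ l₂ : List {i : ℕ // i + 1 < n}) : Prop :=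
  ∃ (x y : List {i : ℕ // i + 1 < n}) (a b : {i : ℕ // i + 1 < n}),
    (a.1 + 2 ≤ b.1 ∨ b.1 + 2 ≤ a.1) ∧
    l₁ = x ++ a :: b :: y ∧ l₂ = x ++ b :: a :: y

namespace FCaux

variable {n : ℕ}

abbrev Idx (n : ℕ) := {i : ℕ // i + 1 < n}

def lo (i : Idx n) : Fin n := ⟨i.1, Nat.lt_of_succ_lt i.2⟩
def hi (i : Idx n) : Fin n := ⟨i.1 + 1, i.2⟩

lemma lo_lt_hi (i : Idx n) : lo i < hi i := by simp [lo, hi, Fin.lt_def]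

lemma simpleT_apply_val (i : Idx n) (x : Fin n) :
    ((simpleT n i) x).1 = if x.1 = i.1 then i.1 + 1 else if x.1 = i.1 + 1 then i.1 else x.1 := by
  simp only [simpleT, Equiv.swap_apply_def, Fin.ext_iff, apply_ite Fin.val]

lemma simpleT_lt (i : Idx n) {p q : Fin n} (hpq : p < q)
    (h : ¬(p = lo i ∧ q = hi i)) : simpleT n i p < simpleT n i q := by
  have hp := simpleT_apply_val i p
  have hq := simpleT_apply_val i q
  rw [Fin.lt_def] at hpq ⊢
  rw [hp, hq]
  simp only [lo, hi, Fin.ext_iff] at h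
  push_neg at h
  split_ifs <;> omega

lemma simpleT_fix (i : Idx n) {x : Fin n} (h1 : x.1 ≠ i.1) (h2 : x.1 ≠ i.1 + 1) :
    simpleT n i x = x := by
  have := simpleT_apply_val i x
  rw [if_neg h1, if_neg h2] at this
  exact Fin.ext this

lemma simpleT_simpleT (i : Idx n) (x : Fin n) : simpleT n i (simpleT n i x) = x :=
  Equiv.swap_apply_self _ _ _

lemma simpleT_mul_self (i : Idx n) : simpleT n i * simpleT n i = 1 :=
  Equiv.swap_mul_self _ _

lemma simpleT_inv (i : Idx n) : (simpleT n i)⁻¹ = simpleT n i :=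
  Equiv.swap_inv _ _

lemma simpleT_lo (i : Idx n) : simpleT n i (lo i) = hi i := Equiv.swap_apply_left _ _

lemma simpleT_hi (i : Idx n) : simpleT n i (hi i) = lo i := Equiv.swap_apply_right _ _

/-- inversion set -/
def invSet (u : Equiv.Perm (Fin n)) : Finset (Fin n × Fin n) :=
  Finset.univ.filter fun x => x.1 < x.2 ∧ u x.2 < u x.1

def invCount (u : Equiv.Perm (Fin n)) : ℕ := (invSet u).card

lemma mem_invSet {u : Equiv.Perm (Fin n)} {x : Fin n × Fin n} :
    x ∈ invSet u ↔ x.1 < x.2 ∧ u x.2 < u x.1 := by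
  simp [invSet]

lemma invCount_inv (u : Equiv.Perm (Fin n)) : invCount u⁻¹ = invCount u := by
  unfold invCount
  apply Finset.card_bij' (fun x _ => (u⁻¹ x.2, u⁻¹ x.1)) (fun x _ => (u x.2, u x.1))
  · rintro ⟨p, q⟩ hx
    rw [mem_invSet] at hx ⊢
    simp only at hx ⊢
    exact ⟨hx.2, by simpa using hx.1⟩
  · rintro ⟨p, q⟩ hx
    rw [mem_invSet] at hx ⊢
    simp only at hx ⊢
    exact ⟨hx.2, by simpa using hx.1⟩
  · rintro ⟨p, q⟩ _; simp
  · rintro ⟨p, q⟩ _; simp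

lemma invCount_one : invCount (1 : Equiv.Perm (Fin n)) = 0 := by
  rw [invCount, Finset.card_eq_zero, Finset.eq_empty_iff_forall_notMem]
  rintro ⟨p, q⟩ hx
  rw [mem_invSet] at hx
  simp only [Equiv.Perm.one_apply] at hx
  exact absurd hx.2 (not_lt.2 hx.1.le)

/-- Right multiplication by a simple transposition with ascending positions adds 1. -/
lemma invCount_mul_asc (u : Equiv.Perm (Fin n)) (i : Idx n)
    (h : u (lo i) < u (hi i)) :
    invCount (u * simpleT n i) = invCount u + 1 := by
  classical
  set s := simpleT n i with hs
  have key : invSet (u * s) =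
      insert (lo i, hi i) ((invSet u).image fun x => (s x.1, s x.2)) := by
    ext ⟨p, q⟩
    simp only [mem_invSet, Finset.mem_insert, Finset.mem_image, Prod.mk.injEq, Prod.exists,
      Equiv.Perm.mul_apply]
    constructor
    · rintro ⟨hpq, hinv⟩
      by_cases hI : p = lo i ∧ q = hi i
      · exact Or.inl ⟨hI.1, hI.2⟩
      · refine Or.inr ⟨s p, s q, ⟨simpleT_lt i hpq hI, hinv⟩, ?_, ?_⟩
        · rw [hs, simpleT_simpleT]
        · rw [hs, simpleT_simpleT]
    · rintro (⟨rfl, rfl⟩ | ⟨p', q', ⟨hpq', hinv'⟩, rfl, rfl⟩)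
      · refine ⟨lo_lt_hi i, ?_⟩
        rw [hs, simpleT_hi, simpleT_lo]; exact h
      · have hne : ¬(p' = lo i ∧ q' = hi i) := by
          rintro ⟨rfl, rfl⟩
          exact absurd hinv' (not_lt.2 h.le)
        refine ⟨simpleT_lt i hpq' hne, ?_⟩
        rw [hs, simpleT_simpleT, simpleT_simpleT]; exact hinv'
  have hnotmem : (lo i, hi i) ∉ (invSet u).image fun x => (s x.1, s x.2) := by
    rw [Finset.mem_image]
    rintro ⟨⟨p', q'⟩, hmem, heq⟩
    rw [mem_invSet] at hmem
    simp only [Prod.mk.injEq] at heq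
    have hp' : p' = hi i := by
      have := congrArg s heq.1; rwa [hs, simpleT_simpleT, simpleT_lo] at this
    have hq' : q' = lo i := by
      have := congrArg s heq.2; rwa [hs, simpleT_simpleT, simpleT_hi] at this
    rw [hp', hq'] at hmem
    exact absurd hmem.1 (not_lt.2 (lo_lt_hi i).le)
  have hinj : Function.Injective fun x : Fin n × Fin n => (s x.1, s x.2) := by
    rintro ⟨p, q⟩ ⟨p', q'⟩ heq
    simp only [Prod.mk.injEq] at heq
    exact Prod.ext (s.injective heq.1) (s.injective heq.2)
  rw [invCount, key, Finset.card_insert_of_notMem hnotmem,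
    Finset.card_image_of_injective _ hinj]
  rfl

lemma invCount_mul_desc (u : Equiv.Perm (Fin n)) (i : Idx n)
    (h : u (hi i) < u (lo i)) :
    invCount u = invCount (u * simpleT n i) + 1 := by
  have h' : (u * simpleT n i) (lo i) < (u * simpleT n i) (hi i) := by
    rw [Equiv.Perm.mul_apply, Equiv.Perm.mul_apply, simpleT_lo, simpleT_hi]; exact h
  have := invCount_mul_asc (u * simpleT n i) i h'
  rwa [mul_assoc, simpleT_mul_self, mul_one] at this

def Des (i : Idx n) (u : Equiv.Perm (Fin n)) : Prop := u⁻¹ (hi i) < u⁻¹ (lo i)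

lemma invCount_smul_of_not_des {u : Equiv.Perm (Fin n)} {i : Idx n} (h : ¬ Des i u) :
    invCount (simpleT n i * u) = invCount u + 1 := by
  have hne : u⁻¹ (lo i) ≠ u⁻¹ (hi i) := fun e =>
    absurd (u⁻¹.injective e) (ne_of_lt (lo_lt_hi i))
  have h' : u⁻¹ (lo i) < u⁻¹ (hi i) := lt_of_le_of_ne (not_lt.1 h) hne
  have := invCount_mul_asc u⁻¹ i h'
  rw [← invCount_inv (simpleT n i * u), mul_inv_rev, simpleT_inv, this, invCount_inv]

lemma invCount_smul_of_des {u : Equiv.Perm (Fin n)} {i : Idx n} (h : Des i u) :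
    invCount u = invCount (simpleT n i * u) + 1 := by
  have := invCount_mul_desc u⁻¹ i h
  rw [invCount_inv] at this
  rw [this, ← invCount_inv (simpleT n i * u), mul_inv_rev, simpleT_inv]

lemma wordProd_nil : wordProd n [] = 1 := rfl

lemma wordProd_cons (a : Idx n) (l : List (Idx n)) :
    wordProd n (a :: l) = simpleT n a * wordProd n l := by
  simp [wordProd]

lemma wordProd_append (l₁ l₂ : List (Idx n)) :
    wordProd n (l₁ ++ l₂) = wordProd n l₁ * wordProd n l₂ := by
  simp [wordProd]

lemma invCount_wordProd_le (l : List (Idx n)) : invCount (wordProd n l) ≤ l.length := by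
  induction l with
  | nil => rw [wordProd_nil, invCount_one]; exact Nat.zero_le _
  | cons a l ih =>
    rw [wordProd_cons]
    by_cases hd : Des a (wordProd n l)
    · have := invCount_smul_of_des hd
      simp only [List.length_cons]
      omega
    · rw [invCount_smul_of_not_des hd]
      simp only [List.length_cons]
      omega

lemma eq_one_of_invCount_eq_zero {u : Equiv.Perm (Fin n)} (h : invCount u = 0) : u = 1 := by
  have hs : StrictMono u := by
    intro p q hpq
    by_contra hle
    have hne : u q ≠ u p := fun e => absurd (u.injective e) (ne_of_gt hpq)
    have : u q < u p := lt_of_le_of_ne (not_lt.1 hle) hne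
    have hmem : (p, q) ∈ invSet u := mem_invSet.2 ⟨hpq, this⟩
    rw [invCount, Finset.card_eq_zero] at h
    rw [h] at hmem
    exact absurd hmem (Finset.notMem_empty _)
  have hrange : Set.range u = Set.range (id : Fin n → Fin n) := by
    rw [u.surjective.range_eq, Set.range_id]
  have inst : WellFoundedLT (Fin n) := inferInstance
  have := (@StrictMono.range_inj _ _ _ _ inst _ _ hs (strictMono_id (α := Fin n))).1 hrange
  exact Equiv.ext fun x => congrFun this x

lemma exists_adj_desc {u : Equiv.Perm (Fin n)} (h : invCount u ≠ 0) :
    ∃ i : Idx n, u (hi i) < u (lo i) := by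
  by_contra hc
  push_neg at hc
  apply h
  have adj : ∀ p q : Fin n, q.1 = p.1 + 1 → u p < u q := by
    intro p q hq
    have hp : p.1 + 1 < n := hq ▸ q.2
    have hql : hi ⟨p.1, hp⟩ = q := Fin.ext (by simp [hi]; omega)
    have hpl : lo ⟨p.1, hp⟩ = p := rfl
    have hne : u p ≠ u q := fun e => by
      have := u.injective e; rw [this] at hq; omega
    have hle := hc ⟨p.1, hp⟩
    rw [hpl, hql] at hle
    exact lt_of_le_of_ne hle hne
  have step : ∀ (d : ℕ) (p q : Fin n), q.1 = p.1 + d + 1 → u p < u q := by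
    intro d
    induction d with
    | zero => intro p q hq; exact adj p q hq
    | succ d ih =>
      intro p q hq
      have hr : p.1 + d + 1 < n := by have := q.2; omega
      exact (ih p ⟨p.1 + d + 1, hr⟩ rfl).trans (adj _ q (by show q.1 = p.1 + d + 1 + 1; omega))
  have hs : StrictMono u := by
    intro p q hpq
    rw [Fin.lt_def] at hpq
    exact step (q.1 - p.1 - 1) p q (by omega)
  rw [invCount, Finset.card_eq_zero, Finset.eq_empty_iff_forall_notMem]
  rintro ⟨p, q⟩ hmem
  rw [mem_invSet] at hmem
  exact absurd (hs hmem.1) (not_lt.2 hmem.2.le)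

lemma exists_word (u : Equiv.Perm (Fin n)) :
    ∃ l : List (Idx n), wordProd n l = u ∧ l.length = invCount u := by
  generalize hk : invCount u = k
  induction k generalizing u with
  | zero =>
    exact ⟨[], by rw [wordProd_nil, eq_one_of_invCount_eq_zero hk], rfl⟩
  | succ k ih =>
    obtain ⟨i, hi'⟩ := exists_adj_desc (by omega : invCount u ≠ 0)
    have h2 := invCount_mul_desc u i hi'
    obtain ⟨l, hl, hlen⟩ := ih (u * simpleT n i) (by omega)
    refine ⟨l ++ [i], ?_, ?_⟩
    · rw [wordProd_append, hl]
      show u * simpleT n i * wordProd n [i] = u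
      rw [wordProd_cons, wordProd_nil, mul_one, mul_assoc, simpleT_mul_self, mul_one]
    · have hx : (l ++ [i]).length = l.length + 1 := by simp
      omega


lemma reduced_iff {w : Equiv.Perm (Fin n)} {l : List (Idx n)} :
    IsReducedWord n w l ↔ (wordProd n l = w ∧ l.length = invCount w) := by
  constructor
  · rintro ⟨hp, hmin⟩
    obtain ⟨l', hl', hlen'⟩ := exists_word w
    refine ⟨hp, le_antisymm ((hmin l' hl').trans hlen'.le) ?_⟩
    rw [← hp]; exact invCount_wordProd_le l
  · rintro ⟨hp, hlen⟩
    refine ⟨hp, fun l' hl' => ?_⟩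
    rw [hlen, ← hl']
    exact invCount_wordProd_le l'

lemma head_des {w : Equiv.Perm (Fin n)} {a : Idx n} {t : List (Idx n)}
    (h : wordProd n (a :: t) = w) (hlen : (a :: t).length = invCount w) :
    Des a w ∧ wordProd n t = simpleT n a * w ∧ t.length = invCount (simpleT n a * w) := by
  have ht : wordProd n t = simpleT n a * w := by
    rw [← h, wordProd_cons, ← mul_assoc, simpleT_mul_self, one_mul]
  have hle : invCount (simpleT n a * w) ≤ t.length := by
    rw [← ht]; exact invCount_wordProd_le t
  simp only [List.length_cons] at hlen
  by_cases hd : Des a w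
  · have := invCount_smul_of_des hd
    exact ⟨hd, ht, by omega⟩
  · exfalso
    have := invCount_smul_of_not_des hd
    omega

def Avoids (w : Equiv.Perm (Fin n)) : Prop :=
  ¬ ∃ i j k : Fin n, i < j ∧ j < k ∧ w k < w j ∧ w j < w i

lemma no_adjacent {w : Equiv.Perm (Fin n)} (hw : Avoids w) {a b : Idx n}
    (ha : Des a w) (hb : Des b w) (hab : b.1 = a.1 + 1) : False := by
  apply hw
  have hlb : lo b = hi a := Fin.ext (by simp [lo, hi, hab])
  refine ⟨w⁻¹ (hi b), w⁻¹ (hi a), w⁻¹ (lo a), ?_, ha, ?_, ?_⟩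
  · rw [← hlb]; exact hb
  · rw [show ∀ x, w (w⁻¹ x) = x from w.apply_symm_apply, show ∀ x, w (w⁻¹ x) = x from w.apply_symm_apply]
    exact lo_lt_hi a
  · rw [show ∀ x, w (w⁻¹ x) = x from w.apply_symm_apply, show ∀ x, w (w⁻¹ x) = x from w.apply_symm_apply]
    simp only [hi, Fin.lt_def, hab]
    omega

lemma avoids_smul {w : Equiv.Perm (Fin n)} (hw : Avoids w) {a : Idx n} (hd : Des a w) :
    Avoids (simpleT n a * w) := by
  rintro ⟨i, j, k, hij, hjk, h1, h2⟩
  apply hw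
  set v := simpleT n a * w with hv
  have hwv : ∀ x, w x = simpleT n a (v x) := by
    intro x
    rw [hv, ← Equiv.Perm.mul_apply, ← mul_assoc, simpleT_mul_self, one_mul]
  have hvinv : ∀ x y : Fin n, v x = lo a → v y = hi a → x = v⁻¹ (lo a) ∧ y = v⁻¹ (hi a) := by
    intro x y hx hy
    constructor
    · rw [← hx, show ∀ y, v⁻¹ (v y) = y from v.symm_apply_apply]
    · rw [← hy, show ∀ y, v⁻¹ (v y) = y from v.symm_apply_apply]
  have hvlo : v⁻¹ (lo a) = w⁻¹ (hi a) := by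
    rw [hv, mul_inv_rev, simpleT_inv, Equiv.Perm.mul_apply, simpleT_lo]
  have hvhi : v⁻¹ (hi a) = w⁻¹ (lo a) := by
    rw [hv, mul_inv_rev, simpleT_inv, Equiv.Perm.mul_apply, simpleT_hi]
  have key : ∀ x y : Fin n, x < y → v y < v x → simpleT n a (v y) < simpleT n a (v x) := by
    intro x y hxy hvyx
    apply simpleT_lt a hvyx
    rintro ⟨hy, hx⟩
    obtain ⟨hy', hx'⟩ := hvinv y x hy hx
    rw [hvlo] at hy'
    rw [hvhi] at hx'
    -- x < y, x = w⁻¹ (lo a), y = w⁻¹ (hi a), but Des a w : w⁻¹ (hi a) < w⁻¹ (lo a)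
    rw [hx', hy'] at hxy
    exact absurd hd (not_lt.2 hxy.le)
  refine ⟨i, j, k, hij, hjk, ?_, ?_⟩
  · rw [hwv k, hwv j]; exact key j k hjk h1
  · rw [hwv j, hwv i]; exact key i j hij h2

lemma simpleT_comm (a b : Idx n) (hab : a.1 + 2 ≤ b.1 ∨ b.1 + 2 ≤ a.1) :
    simpleT n a * simpleT n b = simpleT n b * simpleT n a := by
  ext x
  rw [Equiv.Perm.mul_apply, Equiv.Perm.mul_apply]
  rw [simpleT_apply_val a, simpleT_apply_val b, simpleT_apply_val b, simpleT_apply_val a]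
  split_ifs <;> omega

lemma des_smul {w : Equiv.Perm (Fin n)} (a b : Idx n) (hab : a.1 + 2 ≤ b.1 ∨ b.1 + 2 ≤ a.1)
    (hb : Des b w) : Des b (simpleT n a * w) := by
  unfold Des at *
  rw [mul_inv_rev, simpleT_inv, Equiv.Perm.mul_apply, Equiv.Perm.mul_apply]
  rw [simpleT_fix a (x := hi b) (by simp [hi]; omega) (by simp [hi]; omega),
    simpleT_fix a (x := lo b) (by simp [lo]; omega) (by simp [lo]; omega)]
  exact hb

lemma rtg_cons (a : Idx n) {t₁ t₂ : List (Idx n)}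
    (h : Relation.ReflTransGen (CommMove n) t₁ t₂) :
    Relation.ReflTransGen (CommMove n) (a :: t₁) (a :: t₂) := by
  induction h with
  | refl => exact Relation.ReflTransGen.refl
  | tail _ h2 ih =>
    refine ih.tail ?_
    obtain ⟨x, y, c, d, hcd, rfl, rfl⟩ := h2
    exact ⟨a :: x, y, c, d, hcd, rfl, rfl⟩

lemma main : ∀ (N : ℕ) (w : Equiv.Perm (Fin n)) (l₁ l₂ : List (Idx n)),
    Avoids w → wordProd n l₁ = w → l₁.length = invCount w →
    wordProd n l₂ = w → l₂.length = invCount w → l₁.length ≤ N →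
    Relation.ReflTransGen (CommMove n) l₁ l₂ := by
  intro N
  induction N with
  | zero =>
    intro w l₁ l₂ _ _ h1 _ h2 hN
    have e1 : l₁ = [] := List.eq_nil_of_length_eq_zero (by omega)
    have e2 : l₂ = [] := List.eq_nil_of_length_eq_zero (by omega)
    rw [e1, e2]
  | succ N ih =>
    intro w l₁ l₂ hav hp1 hl1 hp2 hl2 hN
    match l₁, l₂ with
    | [], l₂ =>
      have : l₂ = [] := List.eq_nil_of_length_eq_zero (by simp at hl1; omega)
      rw [this]
    | a :: t₁, [] =>
      simp at hl1 hl2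
      omega
    | a :: t₁, b :: t₂ =>
      obtain ⟨hda, hpt₁, hlt₁⟩ := head_des hp1 hl1
      obtain ⟨hdb, hpt₂, hlt₂⟩ := head_des hp2 hl2
      have hava := avoids_smul hav hda
      have havb := avoids_smul hav hdb
      simp only [List.length_cons] at hN hl1 hl2
      by_cases hab : a = b
      · subst hab
        exact rtg_cons a (ih _ t₁ t₂ hava hpt₁ hlt₁ hpt₂ hlt₂ (by omega))
      · have hfar : a.1 + 2 ≤ b.1 ∨ b.1 + 2 ≤ a.1 := by
          have h1 : a.1 ≠ b.1 := fun e => hab (Subtype.ext e)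
          have h2 : ¬ b.1 = a.1 + 1 := fun e => no_adjacent hav hda hdb e
          have h3 : ¬ a.1 = b.1 + 1 := fun e => no_adjacent hav hdb hda e
          omega
        have hdb' : Des b (simpleT n a * w) := des_smul a b hfar hdb
        have hda' : Des a (simpleT n b * w) := des_smul b a hfar.symm hda
        obtain ⟨r, hr, hrlen⟩ := exists_word (simpleT n b * (simpleT n a * w))
        have hcomm : simpleT n b * (simpleT n a * w) = simpleT n a * (simpleT n b * w) := by
          rw [← mul_assoc, ← mul_assoc, simpleT_comm b a (Or.symm hfar)]
        have hcnt_a := invCount_smul_of_des hda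
        have hcnt_b := invCount_smul_of_des hdb
        have hcnt_ba := invCount_smul_of_des hdb'
        have hcnt_ab := invCount_smul_of_des hda'
        rw [← hcomm] at hcnt_ab
        -- b :: r is a word for simpleT n a * w
        have h1 : wordProd n (b :: r) = simpleT n a * w := by
          rw [wordProd_cons, hr, ← mul_assoc, simpleT_mul_self, one_mul]
        have hlen1 : (b :: r).length = invCount (simpleT n a * w) := by
          simp only [List.length_cons]; omega
        have step1 := ih (simpleT n a * w) t₁ (b :: r) hava hpt₁ hlt₁ h1 hlen1 (by omega)
        -- a :: r is a word for simpleT n b * w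
        have h2 : wordProd n (a :: r) = simpleT n b * w := by
          rw [wordProd_cons, hr, hcomm, ← mul_assoc, simpleT_mul_self, one_mul]
        have hlen2 : (a :: r).length = invCount (simpleT n b * w) := by
          simp only [List.length_cons]; omega
        have step2 := ih (simpleT n b * w) (a :: r) t₂ havb h2 hlen2 hpt₂ hlt₂
          (by simp only [List.length_cons]; omega)
        have mid : Relation.ReflTransGen (CommMove n) (a :: b :: r) (b :: a :: r) :=
          Relation.ReflTransGen.single ⟨[], r, a, b, hfar, rfl, rfl⟩
        exact ((rtg_cons a step1).trans mid).trans (rtg_cons b step2)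

end FCaux

/-- A 321-avoiding permutation is fully commutative: any two of its reduced words are
connected by a sequence of commutation moves alone. -/
theorem stmt_10 (n : ℕ) (w : Equiv.Perm (Fin n))
    (havoid : ¬ ∃ i j k : Fin n, i < j ∧ j < k ∧ w k < w j ∧ w j < w i)
    (l₁ l₂ : List {i : ℕ // i + 1 < n})
    (h₁ : IsReducedWord n w l₁) (h₂ : IsReducedWord n w l₂) :
    Relation.ReflTransGen (CommMove n) l₁ l₂ := by
  obtain ⟨hp1, hl1⟩ := FCaux.reduced_iff.1 h₁
  obtain ⟨hp2, hl2⟩ := FCaux.reduced_iff.1 h₂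
  exact FCaux.main l₁.length w l₁ l₂ havoid hp1 hl1 hp2 hl2 le_rfl
end

section
/- In the symmetric group S_{2k-2}, every reduced word of the Grassmannian permutation π = [2,4,...,2k-2,1,3,...,2k-3] is Knuth-equivalent (as a word in the letters 1,...,2k-3 indexing the simple transpositions) to every other reduced word of π under the relations bac ~ bca and cab ~ acb for a < b < c, i.e., the reduced words of a permutation avoiding both 321 and 2143 form a single Knuth equivalence class. -/
/-- A single Knuth move (on triples of distinct letters `a < b < c`):
`bac ~ bca` or `cab ~ acb`, in either direction. -/
def KnuthMove (n : ℕ) (l₁ l₂ : List {i : ℕ // i + 1 < n}) : Prop :=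
  ∃ (x y : List {i : ℕ // i + 1 < n}) (a b c : {i : ℕ // i + 1 < n}),
    a.1 < b.1 ∧ b.1 < c.1 ∧
    ((l₁ = x ++ [b, a, c] ++ y ∧ l₂ = x ++ [b, c, a] ++ y) ∨
     (l₁ = x ++ [b, c, a] ++ y ∧ l₂ = x ++ [b, a, c] ++ y) ∨
     (l₁ = x ++ [c, a, b] ++ y ∧ l₂ = x ++ [a, c, b] ++ y) ∨
     (l₁ = x ++ [a, c, b] ++ y ∧ l₂ = x ++ [c, a, b] ++ y))

namespace Stmt17



abbrev Box := ℕ × ℕ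

def bLe (b c : Box) : Prop := b.1 ≤ c.1 ∧ b.2 ≤ c.2

instance (a b : Box) : Decidable (bLe a b) := by unfold bLe; infer_instance

def IsMaxIn (S : Finset Box) (b : Box) : Prop :=
  b ∈ S ∧ ∀ c ∈ S, bLe b c → c = b

def IsIdeal (S : Finset Box) : Prop := ∀ b ∈ S, ∀ c : Box, bLe c b → c ∈ S

inductive RevExt : Finset Box → List Box → Prop
  | nil : RevExt ∅ []
  | cons (b : Box) (S : Finset Box) (L : List Box) :
      IsMaxIn S b → RevExt (S.erase b) L → RevExt S (b :: L)

def col (S : Finset Box) (x : ℕ) : ℕ := (S.filter (fun b => b.1 = x)).card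
def row (S : Finset Box) (y : ℕ) : ℕ := (S.filter (fun b => b.2 = y)).card

lemma mem_iff_lt_col {S : Finset Box} (hS : IsIdeal S) (x y : ℕ) :
    (x, y) ∈ S ↔ y < col S x := by
  constructor
  · intro h
    have hsub : (Finset.range (y+1)).image (fun y' => (x, y')) ⊆
        S.filter (fun b => b.1 = x) := by
      intro c hc
      simp only [Finset.mem_image, Finset.mem_range] at hc
      obtain ⟨y', hy', rfl⟩ := hc
      refine Finset.mem_filter.2 ⟨hS _ h _ ⟨le_refl _, by simp; omega⟩, rfl⟩
    have h1 := Finset.card_le_card hsub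
    rw [Finset.card_image_of_injective _ (fun a b hab => by simpa using hab),
      Finset.card_range] at h1
    exact lt_of_lt_of_le (Nat.lt_succ_self y) h1
  · intro h
    by_contra hmem
    have hsub : S.filter (fun b => b.1 = x) ⊆
        (Finset.range y).image (fun y' => (x, y')) := by
      intro c hc
      obtain ⟨hcS, hcx⟩ := Finset.mem_filter.1 hc
      simp only [Finset.mem_image, Finset.mem_range]
      refine ⟨c.2, ?_, by rw [← hcx]⟩
      by_contra hy
      exact hmem (hS _ hcS _ ⟨by omega, by omega⟩)
    have h1 : col S x ≤ ((Finset.range y).image (fun y' => (x, y'))).card :=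
      Finset.card_le_card hsub
    have h2 := Finset.card_image_le (s := Finset.range y) (f := fun y' => (x, y'))
    rw [Finset.card_range] at h2
    omega
  
lemma mem_iff_lt_row {S : Finset Box} (hS : IsIdeal S) (x y : ℕ) :
    (x, y) ∈ S ↔ x < row S y := by
  constructor
  · intro h
    have hsub : (Finset.range (x+1)).image (fun x' => (x', y)) ⊆
        S.filter (fun b => b.2 = y) := by
      intro c hc
      simp only [Finset.mem_image, Finset.mem_range] at hc
      obtain ⟨x', hx', rfl⟩ := hc
      refine Finset.mem_filter.2 ⟨hS _ h _ ⟨by simp; omega, le_refl _⟩, rfl⟩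
    have h1 := Finset.card_le_card hsub
    rw [Finset.card_image_of_injective _ (fun a b hab => by simpa using hab),
      Finset.card_range] at h1
    exact lt_of_lt_of_le (Nat.lt_succ_self x) h1
  · intro h
    by_contra hmem
    have hsub : S.filter (fun b => b.2 = y) ⊆
        (Finset.range x).image (fun x' => (x', y)) := by
      intro c hc
      obtain ⟨hcS, hcy⟩ := Finset.mem_filter.1 hc
      simp only [Finset.mem_image, Finset.mem_range]
      refine ⟨c.1, ?_, by rw [← hcy]⟩
      by_contra hx
      exact hmem (hS _ hcS _ ⟨by omega, by omega⟩)
    have h1 : row S y ≤ ((Finset.range x).image (fun x' => (x', y))).card :=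
      Finset.card_le_card hsub
    have h2 := Finset.card_image_le (s := Finset.range x) (f := fun x' => (x', y))
    rw [Finset.card_range] at h2
    omega

lemma col_mono {S : Finset Box} (hS : IsIdeal S) {x x' : ℕ} (h : x ≤ x') :
    col S x' ≤ col S x := by
  unfold col
  apply Finset.card_le_card_of_injOn (fun b => (x, b.2))
  · intro b hb
    obtain ⟨hbS, hbx⟩ := Finset.mem_filter.1 hb
    exact Finset.mem_filter.2 ⟨hS _ hbS _ ⟨by simp; omega, le_refl _⟩, rfl⟩
  · intro b hb c hc hbc
    obtain ⟨_, hb2⟩ := Finset.mem_filter.1 hb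
    obtain ⟨_, hc2⟩ := Finset.mem_filter.1 hc
    have : b.2 = c.2 := by simpa using hbc
    exact Prod.ext (hb2.trans hc2.symm) this

lemma row_mono {S : Finset Box} (hS : IsIdeal S) {y y' : ℕ} (h : y ≤ y') :
    row S y' ≤ row S y := by
  unfold row
  apply Finset.card_le_card_of_injOn (fun b => (b.1, y))
  · intro b hb
    obtain ⟨hbS, hby⟩ := Finset.mem_filter.1 hb
    exact Finset.mem_filter.2 ⟨hS _ hbS _ ⟨le_refl _, by simp; omega⟩, rfl⟩
  · intro b hb c hc hbc
    obtain ⟨_, hb2⟩ := Finset.mem_filter.1 hb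
    obtain ⟨_, hc2⟩ := Finset.mem_filter.1 hc
    have : b.1 = c.1 := by simpa using hbc
    exact Prod.ext this (hb2.trans hc2.symm)

lemma col_erase_self {S : Finset Box} {b : Box} (hb : b ∈ S) :
    col (S.erase b) b.1 = col S b.1 - 1 := by
  unfold col
  rw [Finset.filter_erase]
  exact Finset.card_erase_of_mem (Finset.mem_filter.2 ⟨hb, rfl⟩)

lemma col_erase_ne {S : Finset Box} (b : Box) {x : ℕ} (hx : b.1 ≠ x) :
    col (S.erase b) x = col S x := by
  unfold col
  rw [Finset.filter_erase, Finset.erase_eq_of_notMem]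
  intro h
  exact hx (Finset.mem_filter.1 h).2

lemma row_erase_self {S : Finset Box} {b : Box} (hb : b ∈ S) :
    row (S.erase b) b.2 = row S b.2 - 1 := by
  unfold row
  rw [Finset.filter_erase]
  exact Finset.card_erase_of_mem (Finset.mem_filter.2 ⟨hb, rfl⟩)

lemma row_erase_ne {S : Finset Box} (b : Box) {y : ℕ} (hy : b.2 ≠ y) :
    row (S.erase b) y = row S y := by
  unfold row
  rw [Finset.filter_erase, Finset.erase_eq_of_notMem]
  intro h
  exact hy (Finset.mem_filter.1 h).2

lemma ideal_erase_max {S : Finset Box} (hS : IsIdeal S) {b : Box} (hb : IsMaxIn S b) :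
    IsIdeal (S.erase b) := by
  intro z hz c hc
  have hzS : z ∈ S := Finset.mem_of_mem_erase hz
  have hcS : c ∈ S := hS _ hzS _ hc
  rw [Finset.mem_erase]
  refine ⟨?_, hcS⟩
  rintro rfl
  have : z = c := hb.2 z hzS ⟨hc.1, hc.2⟩
  subst this
  exact (Finset.mem_erase.1 hz).1 rfl

lemma col_of_max {S : Finset Box} (hS : IsIdeal S) {b : Box} (hb : IsMaxIn S b) :
    col S b.1 = b.2 + 1 := by
  have h1 : b.2 < col S b.1 := (mem_iff_lt_col hS b.1 b.2).1 (by simpa using hb.1)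
  have h2 : ¬ (b.1, b.2 + 1) ∈ S := by
    intro h
    have := hb.2 _ h ⟨le_refl _, by simp⟩
    simp only [Prod.ext_iff] at this
    omega
  rw [mem_iff_lt_col hS] at h2
  omega

lemma row_of_max {S : Finset Box} (hS : IsIdeal S) {b : Box} (hb : IsMaxIn S b) :
    row S b.2 = b.1 + 1 := by
  have h1 : b.1 < row S b.2 := (mem_iff_lt_row hS b.1 b.2).1 (by simpa using hb.1)
  have h2 : ¬ (b.1 + 1, b.2) ∈ S := by
    intro h
    have := hb.2 _ h ⟨by simp, le_refl _⟩
    simp only [Prod.ext_iff] at this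
    omega
  rw [mem_iff_lt_row hS] at h2
  omega

lemma exists_max_above {S : Finset Box} {a : Box} (ha : a ∈ S) :
    ∃ b, bLe a b ∧ IsMaxIn S b := by
  obtain ⟨b, hb, hmax⟩ := Finset.exists_max_image (S.filter (fun c => bLe a c))
    (fun c => c.1 + c.2) ⟨a, Finset.mem_filter.2 ⟨ha, ⟨le_refl _, le_refl _⟩⟩⟩
  obtain ⟨hbS, hab⟩ := Finset.mem_filter.1 hb
  refine ⟨b, hab, hbS, ?_⟩
  intro c hc hbc
  by_contra hne
  have hac : bLe a c := ⟨le_trans hab.1 hbc.1, le_trans hab.2 hbc.2⟩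
  have hle := hmax c (Finset.mem_filter.2 ⟨hc, hac⟩)
  obtain ⟨h1, h2⟩ := hbc
  exact hne (Prod.ext (by omega) (by omega))

lemma exists_revext (S : Finset Box) : ∃ L, RevExt S L := by
  induction S using Finset.strongInduction with
  | _ S ih =>
    rcases Finset.eq_empty_or_nonempty S with rfl | ⟨a, ha⟩
    · exact ⟨[], RevExt.nil⟩
    · obtain ⟨b, _, hb⟩ := exists_max_above ha
      obtain ⟨L, hL⟩ := ih (S.erase b) (Finset.erase_ssubset hb.1)
      exact ⟨b :: L, RevExt.cons b S L hb hL⟩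

lemma revext_length {S : Finset Box} {L : List Box} (h : RevExt S L) :
    L.length = S.card := by
  induction h with
  | nil => simp
  | cons b S L hb _ ih =>
    simp only [List.length_cons, ih, Finset.card_erase_of_mem hb.1]
    have := Finset.card_pos.2 ⟨b, hb.1⟩
    omega



def PosInv (n : ℕ) (u : Equiv.Perm (Fin n)) : Finset (Fin n × Fin n) :=
  Finset.univ.filter (fun p => p.1 < p.2 ∧ u p.2 < u p.1)

def inv (n : ℕ) (u : Equiv.Perm (Fin n)) : ℕ := (PosInv n u).card

lemma mem_posInv {n : ℕ} {u : Equiv.Perm (Fin n)} {p : Fin n × Fin n} :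
    p ∈ PosInv n u ↔ p.1 < p.2 ∧ u p.2 < u p.1 := by
  simp [PosInv]

lemma simpleT_val {n : ℕ} (a : {i : ℕ // i + 1 < n}) (x : Fin n) :
    (simpleT n a x : ℕ) =
      if (x : ℕ) = a.1 then a.1 + 1 else if (x : ℕ) = a.1 + 1 then a.1 else x := by
  simp only [simpleT, Equiv.swap_apply_def]
  by_cases h1 : (x : ℕ) = a.1
  · rw [if_pos (Fin.ext h1 : x = ⟨a.1, _⟩), if_pos h1]
  · rw [if_neg (fun hh => h1 (by rw [hh]))]
    by_cases h2 : (x : ℕ) = a.1 + 1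
    · rw [if_pos (Fin.ext h2 : x = ⟨a.1 + 1, _⟩), if_neg h1, if_pos h2]
    · rw [if_neg (fun hh => h2 (by rw [hh])), if_neg h1, if_neg h2]

lemma swap_lt {n : ℕ} (a : {i : ℕ // i + 1 < n}) (v w : Fin n) (hvw : v < w) :
    (simpleT n a w < simpleT n a v) ↔ ((v : ℕ) = a.1 ∧ (w : ℕ) = a.1 + 1) := by
  rw [Fin.lt_def, simpleT_val, simpleT_val]
  rw [Fin.lt_def] at hvw
  split_ifs <;> omega

lemma wordProd_cons {n : ℕ} (a : {i : ℕ // i + 1 < n}) (l : List {i : ℕ // i + 1 < n}) :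
    wordProd n (a :: l) = simpleT n a * wordProd n l := by
  simp [wordProd]

lemma wordProd_nil {n : ℕ} : wordProd n [] = 1 := by simp [wordProd]

lemma simpleT_mul_self {n : ℕ} (a : {i : ℕ // i + 1 < n}) :
    simpleT n a * simpleT n a = 1 := by
  simp [simpleT, Equiv.swap_mul_self]

lemma inv_one (n : ℕ) : inv n 1 = 0 := by
  unfold inv
  rw [Finset.card_eq_zero]
  ext p
  simp only [mem_posInv, Finset.notMem_empty, iff_false]
  rintro ⟨h1, h2⟩
  simp only [Equiv.Perm.one_apply] at h2
  exact absurd h1 (not_lt.2 (le_of_lt h2))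

/-- Core toggle lemma: multiplying by an adjacent transposition on the left
toggles a single inversion pair. -/
lemma posInv_step {n : ℕ} (a : {i : ℕ // i + 1 < n}) (u : Equiv.Perm (Fin n))
    (p q : Fin n) (hp : (u p : ℕ) = a.1) (hq : (u q : ℕ) = a.1 + 1) :
    (p < q → PosInv n (simpleT n a * u) = insert (p, q) (PosInv n u) ∧
        (p, q) ∉ PosInv n u) ∧
    (q < p → PosInv n (simpleT n a * u) = (PosInv n u).erase (q, p) ∧
        (q, p) ∈ PosInv n u) := by
  have hApq : ∀ i : Fin n, (u i : ℕ) = a.1 → i = p := by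
    intro i h
    exact u.injective (Fin.ext (by omega : ((u i : ℕ)) = (u p : ℕ)))
  have hA'pq : ∀ i : Fin n, (u i : ℕ) = a.1 + 1 → i = q := by
    intro i h
    exact u.injective (Fin.ext (by omega : ((u i : ℕ)) = (u q : ℕ)))
  have key : ∀ i j : Fin n, i < j →
      ((simpleT n a * u) j < (simpleT n a * u) i ↔
        ((u j < u i ∧ ¬(j = p ∧ i = q)) ∨ (i = p ∧ j = q))) := by
    intro i j hij
    simp only [Equiv.Perm.mul_apply]
    rcases lt_trichotomy (u i) (u j) with h | h | h
    · rw [swap_lt a (u i) (u j) h]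
      constructor
      · rintro ⟨h1, h2⟩
        exact Or.inr ⟨hApq i h1, hA'pq j h2⟩
      · rintro (⟨h1, _⟩ | ⟨e1, e2⟩)
        · exact absurd h (not_lt.2 (le_of_lt h1))
        · subst e1; subst e2; exact ⟨hp, hq⟩
    · exfalso
      have : i = j := u.injective (Fin.ext (by omega : ((u i : ℕ)) = (u j : ℕ)))
      subst this
      exact absurd hij (lt_irrefl _)
    · have hne : simpleT n a (u i) ≠ simpleT n a (u j) := by
        intro hh
        have : i = j := u.injective ((simpleT n a).injective hh)
        subst this
        exact absurd hij (lt_irrefl _)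
      have h2 := swap_lt a (u j) (u i) h
      constructor
      · intro hlt
        have h3 : ¬ (simpleT n a (u i) < simpleT n a (u j)) := not_lt.2 (le_of_lt hlt)
        rw [h2] at h3
        refine Or.inl ⟨h, ?_⟩
        rintro ⟨e1, e2⟩
        subst e1; subst e2
        exact h3 ⟨hp, hq⟩
      · rintro (⟨_, h3⟩ | ⟨e1, e2⟩)
        · rcases lt_trichotomy (simpleT n a (u i)) (simpleT n a (u j)) with hh | hh | hh
          · rw [h2] at hh
            exact absurd ⟨hApq j hh.1, hA'pq i hh.2⟩ h3
          · exact absurd hh hne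
          · exact hh
        · subst e1; subst e2
          rw [Fin.lt_def] at h
          omega
  constructor
  · intro hpq
    have hnot : (p, q) ∉ PosInv n u := by
      rw [mem_posInv]
      rintro ⟨_, h2⟩
      rw [Fin.lt_def] at h2
      simp only at h2
      omega
    refine ⟨?_, hnot⟩
    ext z
    obtain ⟨i, j⟩ := z
    rw [mem_posInv, Finset.mem_insert, mem_posInv]
    constructor
    · rintro ⟨h1, h2⟩
      rw [key i j h1] at h2
      rcases h2 with ⟨h2, _⟩ | ⟨e1, e2⟩
      · exact Or.inr ⟨h1, h2⟩
      · subst e1; subst e2; exact Or.inl rfl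
    · rintro (hz | ⟨h1, h2⟩)
      · rw [Prod.mk.injEq] at hz
        obtain ⟨e1, e2⟩ := hz
        subst e1; subst e2
        exact ⟨hpq, (key _ _ hpq).2 (Or.inr ⟨rfl, rfl⟩)⟩
      · refine ⟨h1, (key i j h1).2 (Or.inl ⟨h2, ?_⟩)⟩
        rintro ⟨e1, e2⟩
        subst e1; subst e2
        exact absurd hpq (not_lt.2 (le_of_lt h1))
  · intro hqp
    have hmem : (q, p) ∈ PosInv n u := by
      rw [mem_posInv]
      refine ⟨hqp, ?_⟩
      rw [Fin.lt_def]
      simp only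
      omega
    refine ⟨?_, hmem⟩
    ext z
    obtain ⟨i, j⟩ := z
    rw [mem_posInv, Finset.mem_erase, mem_posInv]
    constructor
    · rintro ⟨h1, h2⟩
      rw [key i j h1] at h2
      rcases h2 with ⟨h2, h3⟩ | ⟨e1, e2⟩
      · refine ⟨?_, h1, h2⟩
        intro hz
        rw [Prod.mk.injEq] at hz
        exact h3 ⟨hz.2, hz.1⟩
      · exfalso
        subst e1; subst e2
        exact absurd (lt_trans h1 hqp) (lt_irrefl _)
    · rintro ⟨h1, h2, h3⟩
      refine ⟨h2, (key i j h2).2 (Or.inl ⟨h3, ?_⟩)⟩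
      rintro ⟨e1, e2⟩
      subst e1; subst e2
      exact h1 rfl

lemma inv_wordProd_le {n : ℕ} (l : List {i : ℕ // i + 1 < n}) :
    inv n (wordProd n l) ≤ l.length := by
  induction l with
  | nil => rw [wordProd_nil]; simp [inv_one]
  | cons a l ih =>
    rw [wordProd_cons]
    set u := wordProd n l with hu
    set p := u.symm ⟨a.1, Nat.lt_of_succ_lt a.2⟩ with hpd
    set q := u.symm ⟨a.1 + 1, a.2⟩ with hqd
    have hp : (u p : ℕ) = a.1 := by rw [hpd, Equiv.apply_symm_apply]
    have hq : (u q : ℕ) = a.1 + 1 := by rw [hqd, Equiv.apply_symm_apply]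
    have hpq : p ≠ q := by
      intro h
      rw [h] at hp
      omega
    have hstep := posInv_step a u p q hp hq
    rcases lt_or_gt_of_ne hpq with h | h
    · obtain ⟨heq, hnot⟩ := hstep.1 h
      unfold inv
      rw [heq, Finset.card_insert_of_notMem hnot]
      simpa [inv] using ih
    · obtain ⟨heq, hmem⟩ := hstep.2 h
      unfold inv
      rw [heq]
      have := Finset.card_erase_of_mem hmem
      simp only [List.length_cons]
      unfold inv at ih
      omega




/-- The letter of a box. -/
def g (K n : ℕ) (hn : n = 2 * K + 2) (b : Box) : {i : ℕ // i + 1 < n} :=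
  ⟨min ((K + b.2) - b.1) (2 * K), by omega⟩

lemma g_val {K n : ℕ} (hn : n = 2 * K + 2) {b : Box} (hb : b.1 + b.2 ≤ K) :
    ((g K n hn b : {i : ℕ // i + 1 < n}) : ℕ) = (K + b.2) - b.1 := by
  simp only [g]
  omega

/-- The pointwise description of the permutation corresponding to an ideal `S`. -/
def Pt (K n : ℕ) (S : Finset Box) (u : Equiv.Perm (Fin n)) : Prop :=
  ∀ i : Fin n,
    ((i : ℕ) ≤ K → (u i : ℕ) = (i : ℕ) + col S (K - (i : ℕ))) ∧
    (K < (i : ℕ) → (u i : ℕ) + row S ((i : ℕ) - (K + 1)) = (i : ℕ))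

lemma pt_unique {K n : ℕ} {S : Finset Box} {u v : Equiv.Perm (Fin n)}
    (hu : Pt K n S u) (hv : Pt K n S v) : u = v := by
  apply Equiv.ext
  intro i
  apply Fin.ext
  rcases le_or_gt (i : ℕ) K with h | h
  · rw [(hu i).1 h, (hv i).1 h]
  · have h1 := (hu i).2 h
    have h2 := (hv i).2 h
    omega

lemma pt_one {K n : ℕ} (hn : n = 2 * K + 2) {S : Finset Box} (hS : IsIdeal S)
    (hT : ∀ b ∈ S, b.1 + b.2 ≤ K) (h1 : Pt K n S 1) : S = ∅ := by
  by_contra hne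
  obtain ⟨b, hb⟩ := Finset.nonempty_iff_ne_empty.2 hne
  have hbcol : b.2 < col S b.1 := (mem_iff_lt_col hS b.1 b.2).1 (by simpa using hb)
  have hbK : b.1 + b.2 ≤ K := hT b hb
  have h2 : ((1 : Equiv.Perm (Fin n)) ⟨K - b.1, by omega⟩ : ℕ) =
      (K - b.1) + col S (K - (K - b.1)) :=
    (h1 ⟨K - b.1, by omega⟩).1 (by show K - b.1 ≤ K; omega)
  have h3 : ((1 : Equiv.Perm (Fin n)) ⟨K - b.1, by omega⟩ : ℕ) = K - b.1 := rfl
  have hxx : K - (K - b.1) = b.1 := by omega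
  rw [hxx, h3] at h2
  omega

lemma revext_facts {K n : ℕ} (hn : n = 2 * K + 2) {S : Finset Box} {L : List Box}
    (h : RevExt S L) :
    IsIdeal S → (∀ b ∈ S, b.1 + b.2 ≤ K) →
      Pt K n S (wordProd n (L.map (g K n hn))) ∧
      inv n (wordProd n (L.map (g K n hn))) = S.card := by
  induction h with
  | nil =>
    intro _ _
    rw [List.map_nil, wordProd_nil]
    refine ⟨?_, by simp [inv_one]⟩
    intro i
    constructor
    · intro _
      simp [col]
    · intro _
      simp [row]
  | cons b S L hb hL ih =>
    intro hS hT
    have hxy : b.1 + b.2 ≤ K := hT b hb.1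
    have hcol : col S b.1 = b.2 + 1 := col_of_max hS hb
    have hrow : row S b.2 = b.1 + 1 := row_of_max hS hb
    have hS' : IsIdeal (S.erase b) := ideal_erase_max hS hb
    have hT' : ∀ c ∈ S.erase b, c.1 + c.2 ≤ K := fun c hc => hT c (Finset.mem_of_mem_erase hc)
    obtain ⟨hPt', hinv'⟩ := ih hS' hT'
    set a := g K n hn b with ha
    have haval : (a : ℕ) = (K + b.2) - b.1 := g_val hn hxy
    set u' := wordProd n (L.map (g K n hn)) with hu'
    have hwp : wordProd n ((b :: L).map (g K n hn)) = simpleT n a * u' := by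
      rw [List.map_cons, wordProd_cons]
    have hcol' : col (S.erase b) b.1 = b.2 := by
      rw [col_erase_self hb.1, hcol]
      omega
    have hrow' : row (S.erase b) b.2 = b.1 := by
      rw [row_erase_self hb.1, hrow]
      omega
    set P : Fin n := ⟨K - b.1, by omega⟩ with hP
    set Q : Fin n := ⟨K + 1 + b.2, by omega⟩ with hQ
    have hPval : (u' P : ℕ) = a.1 := by
      have e1 : (u' P : ℕ) = (K - b.1) + col (S.erase b) (K - (K - b.1)) :=
        (hPt' P).1 (by show K - b.1 ≤ K; omega)
      have hxx : K - (K - b.1) = b.1 := by omega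
      rw [hxx, hcol'] at e1
      omega
    have hQval : (u' Q : ℕ) = a.1 + 1 := by
      have e2 : (u' Q : ℕ) + row (S.erase b) ((K + 1 + b.2) - (K + 1)) = K + 1 + b.2 :=
        (hPt' Q).2 (by show K < K + 1 + b.2; omega)
      have hyy : (K + 1 + b.2) - (K + 1) = b.2 := by omega
      rw [hyy, hrow'] at e2
      omega
    have hstep := (posInv_step a u' P Q hPval hQval).1 (by
      show K - b.1 < K + 1 + b.2; omega)
    constructor
    · -- Pt
      rw [hwp]
      intro i
      have hval : ((simpleT n a * u') i : ℕ) =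
          if ((u' i : ℕ)) = a.1 then a.1 + 1 else if ((u' i : ℕ)) = a.1 + 1 then a.1
          else (u' i : ℕ) := by
        rw [Equiv.Perm.mul_apply, simpleT_val]
      by_cases hip : i = P
      · subst hip
        rw [hval, if_pos hPval]
        have hiv : (P : ℕ) = K - b.1 := rfl
        constructor
        · intro _
          rw [hiv]
          have hxx : K - (K - b.1) = b.1 := by omega
          rw [hxx, hcol]
          omega
        · intro hcon
          rw [hiv] at hcon
          omega
      · by_cases hiq : i = Q
        · subst hiq
          rw [hval, if_neg (by omega), if_pos hQval]
          have hiv : (Q : ℕ) = K + 1 + b.2 := rfl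
          constructor
          · intro hcon
            rw [hiv] at hcon
            omega
          · intro _
            rw [hiv]
            have hyy : K + 1 + b.2 - (K + 1) = b.2 := by omega
            rw [hyy, hrow]
            omega
        · have hne1 : (u' i : ℕ) ≠ a.1 := by
            intro hcon
            exact hip (u'.injective (Fin.ext (by omega : ((u' i : ℕ)) = (u' P : ℕ))))
          have hne2 : (u' i : ℕ) ≠ a.1 + 1 := by
            intro hcon
            exact hiq (u'.injective (Fin.ext (by omega : ((u' i : ℕ)) = (u' Q : ℕ))))
          rw [hval, if_neg hne1, if_neg hne2]
          constructor
          · intro hiK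
            have h1 := (hPt' i).1 hiK
            have hnx : b.1 ≠ K - (i : ℕ) := by
              intro hcon
              apply hip
              apply Fin.ext
              show (i : ℕ) = K - b.1
              omega
            rw [col_erase_ne b hnx] at h1
            exact h1
          · intro hiK
            have h1 := (hPt' i).2 hiK
            have hny : b.2 ≠ (i : ℕ) - (K + 1) := by
              intro hcon
              apply hiq
              apply Fin.ext
              show (i : ℕ) = K + 1 + b.2
              have := i.isLt
              omega
            rw [row_erase_ne b hny] at h1
            exact h1
    · -- inv
      rw [hwp]
      unfold inv
      rw [hstep.1, Finset.card_insert_of_notMem hstep.2]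
      unfold inv at hinv'
      rw [hinv', Finset.card_erase_of_mem hb.1]
      have := Finset.card_pos.2 ⟨b, hb.1⟩
      omega

lemma reconstruct {K n : ℕ} (hn : n = 2 * K + 2) :
    ∀ (l : List {i : ℕ // i + 1 < n}) (S : Finset Box),
      IsIdeal S → (∀ b ∈ S, b.1 + b.2 ≤ K) → Pt K n S (wordProd n l) →
      inv n (wordProd n l) = l.length →
      ∃ L, RevExt S L ∧ l = L.map (g K n hn) := by
  intro l
  induction l with
  | nil =>
    intro S hS hT hPt hinv
    rw [wordProd_nil] at hPt
    rw [pt_one hn hS hT hPt]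
    exact ⟨[], RevExt.nil, rfl⟩
  | cons a l ih =>
    intro S hS hT hPt hinv
    have hwp : wordProd n (a :: l) = simpleT n a * wordProd n l := wordProd_cons a l
    set u' := wordProd n l with hu'
    set u := wordProd n (a :: l) with hu
    set p := u'.symm ⟨a.1, Nat.lt_of_succ_lt a.2⟩ with hpd
    set q := u'.symm ⟨a.1 + 1, a.2⟩ with hqd
    have hp : (u' p : ℕ) = a.1 := by rw [hpd, Equiv.apply_symm_apply]
    have hq : (u' q : ℕ) = a.1 + 1 := by rw [hqd, Equiv.apply_symm_apply]
    have hpq : p ≠ q := by intro h; rw [h] at hp; omega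
    have hstep := posInv_step a u' p q hp hq
    have hinv'le := inv_wordProd_le (n := n) l
    rw [← hu'] at hinv'le
    -- rule out the "descent" case
    have hplt : p < q := by
      rcases lt_or_gt_of_ne hpq with h | h
      · exact h
      · exfalso
        obtain ⟨heq, hmem⟩ := hstep.2 h
        have hcard := Finset.card_erase_of_mem hmem
        have hpos := Finset.card_pos.2 ⟨(q, p), hmem⟩
        unfold inv at hinv hinv'le
        rw [hwp, heq] at hinv
        simp only [List.length_cons] at hinv
        omega
    obtain ⟨heq, hnot⟩ := hstep.1 hplt
    have hinv' : inv n u' = l.length := by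
      unfold inv at hinv hinv'le ⊢
      rw [hwp, heq, Finset.card_insert_of_notMem hnot] at hinv
      simp only [List.length_cons] at hinv
      omega
    -- values of u at p and q
    have hup : (u p : ℕ) = a.1 + 1 := by
      rw [hwp, Equiv.Perm.mul_apply, simpleT_val, if_pos hp]
    have huq : (u q : ℕ) = a.1 := by
      rw [hwp, Equiv.Perm.mul_apply, simpleT_val, if_neg (by omega), if_pos hq]
    -- p ≤ K < q
    have hpK : (p : ℕ) ≤ K ∧ K < (q : ℕ) := by
      rcases le_or_gt (p : ℕ) K with h1 | h1 <;> rcases le_or_gt (q : ℕ) K with h2 | h2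
      · exfalso
        have e1 := (hPt p).1 h1
        have e2 := (hPt q).1 h2
        have hmono : col S (K - (p : ℕ)) ≤ col S (K - (q : ℕ)) :=
          col_mono hS (by rw [Fin.lt_def] at hplt; omega)
        rw [hup] at e1
        rw [huq] at e2
        rw [Fin.lt_def] at hplt
        omega
      · exact ⟨h1, h2⟩
      · exfalso
        rw [Fin.lt_def] at hplt
        omega
      · exfalso
        have e1 := (hPt p).2 h1
        have e2 := (hPt q).2 h2
        have hmono : row S ((q : ℕ) - (K + 1)) ≤ row S ((p : ℕ) - (K + 1)) :=
          row_mono hS (by rw [Fin.lt_def] at hplt; omega)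
        rw [hup] at e1
        rw [huq] at e2
        rw [Fin.lt_def] at hplt
        omega
    obtain ⟨hp1, hq1⟩ := hpK
    set x := K - (p : ℕ) with hx
    set y := (q : ℕ) - (K + 1) with hy
    have hpx : (p : ℕ) + x = K := by omega
    have hqy : (q : ℕ) = K + 1 + y := by omega
    have hyK : y ≤ K := by
      have := q.isLt
      omega
    have Hcol : (p : ℕ) + col S x = a.1 + 1 := by
      have e1 := (hPt p).1 hp1
      rw [hup, ← hx] at e1
      omega
    have Hrow : a.1 + row S y = (q : ℕ) := by
      have e1 := (hPt q).2 hq1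
      rw [huq, ← hy] at e1
      omega
    have Hsum : col S x + row S y = x + y + 2 := by omega
    have hbS : (x, y) ∈ S := by
      rcases le_or_gt (col S x) y with h | h
      · rw [mem_iff_lt_row hS]
        omega
      · rw [mem_iff_lt_col hS]
        omega
    have hycol : y < col S x := (mem_iff_lt_col hS x y).1 hbS
    have hxrow : x < row S y := (mem_iff_lt_row hS x y).1 hbS
    have hcolx : col S x = y + 1 := by omega
    have hrowy : row S y = x + 1 := by omega
    have hmax : IsMaxIn S (x, y) := by
      refine ⟨hbS, ?_⟩
      intro c hc hbc
      obtain ⟨hc1, hc2⟩ := hbc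
      simp only at hc1 hc2
      have hcx : c.1 = x := by
        by_contra hcon
        have : (x + 1, y) ∈ S := hS c hc (x + 1, y) ⟨by omega, hc2⟩
        rw [mem_iff_lt_row hS] at this
        omega
      have hcy : c.2 = y := by
        by_contra hcon
        have : (x, y + 1) ∈ S := hS c hc (x, y + 1) ⟨hc1, by omega⟩
        rw [mem_iff_lt_col hS] at this
        omega
      exact Prod.ext hcx hcy
    have hbT : x + y ≤ K := hT (x, y) hbS
    have hga : g K n hn (x, y) = a := by
      apply Subtype.ext
      rw [g_val hn hbT]
      simp only
      omega
    -- Pt for the erased set and the tail word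
    have hu'eq : u' = simpleT n a * u := by
      rw [hwp, ← mul_assoc, simpleT_mul_self, one_mul]
    have hS' : IsIdeal (S.erase (x, y)) := ideal_erase_max hS hmax
    have hT' : ∀ c ∈ S.erase (x, y), c.1 + c.2 ≤ K :=
      fun c hc => hT c (Finset.mem_of_mem_erase hc)
    have hcol' : col (S.erase (x, y)) x = y := by
      have := col_erase_self (b := (x, y)) hbS
      simp only at this
      omega
    have hrow' : row (S.erase (x, y)) y = x := by
      have := row_erase_self (b := (x, y)) hbS
      simp only at this
      omega
    have hPt' : Pt K n (S.erase (x, y)) u' := by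
      intro i
      have hval : (u' i : ℕ) =
          if ((u i : ℕ)) = a.1 then a.1 + 1 else if ((u i : ℕ)) = a.1 + 1 then a.1
          else (u i : ℕ) := by
        rw [hu'eq, Equiv.Perm.mul_apply, simpleT_val]
      by_cases hip : i = p
      · subst hip
        rw [hval, if_neg (by omega), if_pos hup]
        constructor
        · intro _
          have hxx : K - (p : ℕ) = x := by omega
          rw [hxx, hcol']
          omega
        · intro hcon
          omega
      · by_cases hiq : i = q
        · subst hiq
          rw [hval, if_pos huq]
          constructor
          · intro hcon
            omega
          · intro _
            have hyy : (q : ℕ) - (K + 1) = y := by omega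
            rw [hyy, hrow']
            omega
        · have hne1 : (u i : ℕ) ≠ a.1 := by
            intro hcon
            exact hiq (u.injective (Fin.ext (by omega : ((u i : ℕ)) = (u q : ℕ))))
          have hne2 : (u i : ℕ) ≠ a.1 + 1 := by
            intro hcon
            exact hip (u.injective (Fin.ext (by omega : ((u i : ℕ)) = (u p : ℕ))))
          rw [hval, if_neg hne1, if_neg hne2]
          constructor
          · intro hiK
            have h1 := (hPt i).1 hiK
            have hnx : (x, y).1 ≠ K - (i : ℕ) := by
              simp only
              intro hcon
              exact hip (Fin.ext (by omega : ((i : ℕ)) = (p : ℕ)))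
            rw [col_erase_ne (x, y) hnx]
            exact h1
          · intro hiK
            have h1 := (hPt i).2 hiK
            have hny : (x, y).2 ≠ (i : ℕ) - (K + 1) := by
              simp only
              intro hcon
              have := i.isLt
              exact hiq (Fin.ext (by omega : ((i : ℕ)) = (q : ℕ)))
            rw [row_erase_ne (x, y) hny]
            exact h1
    obtain ⟨L', hL', hmap⟩ := ih (S.erase (x, y)) hS' hT' hPt' hinv'
    refine ⟨(x, y) :: L', RevExt.cons (x, y) S L' hmax hL', ?_⟩
    rw [List.map_cons, hga, ← hmap]



lemma knuth_cons {n : ℕ} (z : {i : ℕ // i + 1 < n}) {l l' : List {i : ℕ // i + 1 < n}}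
    (h : Relation.ReflTransGen (KnuthMove n) l l') :
    Relation.ReflTransGen (KnuthMove n) (z :: l) (z :: l') := by
  refine Relation.ReflTransGen.lift (z :: ·) ?_ _ _ h
  intro u v huv
  obtain ⟨x, y, a, b, c, h1, h2, h3⟩ := huv
  refine ⟨z :: x, y, a, b, c, h1, h2, ?_⟩
  rcases h3 with ⟨e1, e2⟩ | ⟨e1, e2⟩ | ⟨e1, e2⟩ | ⟨e1, e2⟩ <;> subst e1 <;> subst e2
  · exact Or.inl ⟨by simp, by simp⟩
  · exact Or.inr (Or.inl ⟨by simp, by simp⟩)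
  · exact Or.inr (Or.inr (Or.inl ⟨by simp, by simp⟩))
  · exact Or.inr (Or.inr (Or.inr ⟨by simp, by simp⟩))

lemma erase_swap (S : Finset Box) (a b : Box) :
    (S.erase a).erase b = (S.erase b).erase a := by
  ext c
  simp only [Finset.mem_erase]
  tauto

/-- The witness lemma: between two distinct maximal boxes of an ideal there is a
maximal box of the doubly-erased set with letter strictly between. -/
lemma witness {K : ℕ} {S : Finset Box} (hS : IsIdeal S) (hT : ∀ b ∈ S, b.1 + b.2 ≤ K)
    {β γ : Box} (hβ : IsMaxIn S β) (hγ : IsMaxIn S γ) (hne : β ≠ γ)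
    (hco1 : γ.1 < β.1) (hco2 : β.2 < γ.2) :
    ∃ b, IsMaxIn ((S.erase β).erase γ) b ∧
      (K + β.2) - β.1 < (K + b.2) - b.1 ∧ (K + b.2) - b.1 < (K + γ.2) - γ.1 := by
  have hβT : β.1 + β.2 ≤ K := hT β hβ.1
  have hγT : γ.1 + γ.2 ≤ K := hT γ hγ.1
  have ha1S : (γ.1, γ.2 - 1) ∈ S := hS γ hγ.1 _ ⟨le_refl _, by omega⟩
  have ha1 : (γ.1, γ.2 - 1) ∈ (S.erase β).erase γ := by
    rw [Finset.mem_erase, Finset.mem_erase]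
    refine ⟨?_, ?_, ha1S⟩
    · intro h
      rw [Prod.ext_iff] at h
      simp only at h
      omega
    · intro h
      rw [Prod.ext_iff] at h
      simp only at h
      omega
  obtain ⟨b, hab, hbmax⟩ := exists_max_above ha1
  obtain ⟨hab1, hab2⟩ := hab
  simp only at hab1 hab2
  have hbS : b ∈ S := Finset.mem_of_mem_erase (Finset.mem_of_mem_erase hbmax.1)
  have hbT : b.1 + b.2 ≤ K := hT b hbS
  have hbneβ : b ≠ β := (Finset.mem_erase.1 (Finset.mem_of_mem_erase hbmax.1)).1
  have hbneγ : b ≠ γ := (Finset.mem_erase.1 hbmax.1).1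
  have hb2 : b.2 = γ.2 - 1 := by
    by_contra hcon
    have hb2' : γ.2 ≤ b.2 := by omega
    have : b = γ := hγ.2 b hbS ⟨by omega, hb2'⟩
    exact hbneγ this
  refine ⟨b, hbmax, ?_, ?_⟩
  · -- lower bound: letter of b strictly above letter of β
    by_contra hlow
    rcases Nat.eq_or_lt_of_le (by omega : β.2 + 1 ≤ γ.2) with hcase | hcase
    · -- γ.2 = β.2 + 1
      have hb2β : b.2 = β.2 := by omega
      have hb1β : β.1 ≤ b.1 := by omega
      exact hbneβ (hβ.2 b hbS ⟨hb1β, by omega⟩)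
    · -- γ.2 ≥ β.2 + 2
      have hb1 : β.1 + 1 ≤ b.1 := by omega
      have hwS : (β.1, γ.2 - 1) ∈ S := hS b hbS _ ⟨by omega, by omega⟩
      have := hβ.2 _ hwS ⟨le_refl _, by omega⟩
      rw [Prod.ext_iff] at this
      simp only at this
      omega
  · -- upper bound
    omega

/-- Connectivity of reverse linear extensions under Knuth moves. -/
lemma connectivity {K n : ℕ} (hn : n = 2 * K + 2) :
    ∀ (N : ℕ) (S : Finset Box), S.card = N → IsIdeal S → (∀ b ∈ S, b.1 + b.2 ≤ K) →
    ∀ L₁ L₂, RevExt S L₁ → RevExt S L₂ →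
      Relation.ReflTransGen (KnuthMove n) (L₁.map (g K n hn)) (L₂.map (g K n hn)) := by
  intro N
  induction N using Nat.strong_induction_on with
  | _ N ihN =>
    intro S hcard hS hT L₁ L₂ h₁ h₂
    cases h₁ with
    | nil =>
      cases h₂ with
      | nil => exact Relation.ReflTransGen.refl
      | cons b S L hb hL => exact absurd hb.1 (Finset.notMem_empty b)
    | cons β S F hβ hF =>
      cases h₂ with
      | nil => exact absurd hβ.1 (Finset.notMem_empty β)
      | cons γ S G hγ hG =>
        have hcard' : ∀ c : Box, c ∈ S → (S.erase c).card < N := by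
          intro c hc
          rw [Finset.card_erase_of_mem hc]
          have := Finset.card_pos.2 ⟨c, hc⟩
          omega
        have hT' : ∀ (c : Box), ∀ b ∈ S.erase c, b.1 + b.2 ≤ K :=
          fun c b hb => hT b (Finset.mem_of_mem_erase hb)
        by_cases hbg : β = γ
        · subst hbg
          simp only [List.map_cons]
          exact knuth_cons _ (ihN (S.erase β).card (hcard' β hβ.1) (S.erase β) rfl
            (ideal_erase_max hS hβ) (hT' β) F G hF hG)
        · -- the two heads differ
          have step : ∃ L', RevExt (S.erase γ) (β :: L') ∧
              Relation.ReflTransGen (KnuthMove n)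
                ((β :: F).map (g K n hn)) ((γ :: β :: L').map (g K n hn)) := by
            have hnb1 : ¬ bLe β γ := fun h => hbg (hβ.2 γ hγ.1 h).symm
            have hnb2 : ¬ bLe γ β := fun h => (Ne.symm hbg) (hγ.2 β hβ.1 h).symm
            unfold bLe at hnb1 hnb2
            have hβT : β.1 + β.2 ≤ K := hT β hβ.1
            have hγT : γ.1 + γ.2 ≤ K := hT γ hγ.1
            have hw : ∃ b, IsMaxIn ((S.erase β).erase γ) b ∧
                (((K + β.2) - β.1 < (K + b.2) - b.1 ∧ (K + b.2) - b.1 < (K + γ.2) - γ.1) ∨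
                 ((K + γ.2) - γ.1 < (K + b.2) - b.1 ∧ (K + b.2) - b.1 < (K + β.2) - β.1)) := by
              rcases (by omega : (γ.1 < β.1 ∧ β.2 < γ.2) ∨ (β.1 < γ.1 ∧ γ.2 < β.2)) with h | h
              · obtain ⟨b, h1, h2, h3⟩ := witness hS hT hβ hγ hbg h.1 h.2
                exact ⟨b, h1, Or.inl ⟨h2, h3⟩⟩
              · obtain ⟨b, h1, h2, h3⟩ := witness hS hT hγ hβ (Ne.symm hbg) h.1 h.2
                rw [erase_swap] at h1
                exact ⟨b, h1, Or.inr ⟨h2, h3⟩⟩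
            obtain ⟨b, hbmax, hbw⟩ := hw
            have hbS : b ∈ S := Finset.mem_of_mem_erase (Finset.mem_of_mem_erase hbmax.1)
            have hbT : b.1 + b.2 ≤ K := hT b hbS
            have hγE : IsMaxIn (S.erase β) γ :=
              ⟨Finset.mem_erase.2 ⟨Ne.symm hbg, hγ.1⟩,
               fun c hc h => hγ.2 c (Finset.mem_of_mem_erase hc) h⟩
            have hβE : IsMaxIn (S.erase γ) β :=
              ⟨Finset.mem_erase.2 ⟨hbg, hβ.1⟩,
               fun c hc h => hβ.2 c (Finset.mem_of_mem_erase hc) h⟩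
            obtain ⟨Gr, hGr⟩ := exists_revext (((S.erase β).erase γ).erase b)
            have hH : RevExt (S.erase β) (γ :: b :: Gr) :=
              RevExt.cons γ _ _ hγE (RevExt.cons b _ _ hbmax hGr)
            have hR1 : Relation.ReflTransGen (KnuthMove n)
                (F.map (g K n hn)) ((γ :: b :: Gr).map (g K n hn)) :=
              ihN (S.erase β).card (hcard' β hβ.1) (S.erase β) rfl
                (ideal_erase_max hS hβ) (hT' β) F (γ :: b :: Gr) hF hH
            have hmove : KnuthMove n ((β :: γ :: b :: Gr).map (g K n hn))
                ((γ :: β :: b :: Gr).map (g K n hn)) := by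
              have hvβ := g_val hn hβT
              have hvγ := g_val hn hγT
              have hvb := g_val hn hbT
              rcases hbw with ⟨hw1, hw2⟩ | ⟨hw1, hw2⟩
              · refine ⟨[], Gr.map (g K n hn), g K n hn β, g K n hn b, g K n hn γ,
                  by omega, by omega, ?_⟩
                exact Or.inr (Or.inr (Or.inr ⟨by simp, by simp⟩))
              · refine ⟨[], Gr.map (g K n hn), g K n hn γ, g K n hn b, g K n hn β,
                  by omega, by omega, ?_⟩
                exact Or.inr (Or.inr (Or.inl ⟨by simp, by simp⟩))
            refine ⟨b :: Gr, ?_, ?_⟩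
            · refine RevExt.cons β _ _ hβE ?_
              rw [erase_swap]
              exact RevExt.cons b _ _ hbmax hGr
            · have hlift : Relation.ReflTransGen (KnuthMove n)
                  ((β :: F).map (g K n hn)) ((β :: γ :: b :: Gr).map (g K n hn)) := by
                simp only [List.map_cons]
                exact knuth_cons _ (by simpa using hR1)
              exact hlift.tail hmove
          obtain ⟨L', hL', hR⟩ := step
          have hR2 := ihN (S.erase γ).card (hcard' γ hγ.1) (S.erase γ) rfl
            (ideal_erase_max hS hγ) (hT' γ) (β :: L') G hL' hG
          refine hR.trans ?_
          simp only [List.map_cons]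
          exact knuth_cons _ (by simpa using hR2)


def Tri (K : ℕ) : Finset Box :=
  (Finset.range (K + 1) ×ˢ Finset.range (K + 1)).filter fun b => b.1 + b.2 ≤ K

lemma mem_tri {K : ℕ} {b : Box} : b ∈ Tri K ↔ b.1 + b.2 ≤ K := by
  simp only [Tri, Finset.mem_filter, Finset.mem_product, Finset.mem_range]
  omega

lemma tri_ideal (K : ℕ) : IsIdeal (Tri K) := by
  intro b hb c hc
  rw [mem_tri] at *
  unfold bLe at hc
  omega

lemma tri_bound (K : ℕ) : ∀ b ∈ Tri K, b.1 + b.2 ≤ K := fun _ hb => mem_tri.1 hb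

lemma col_tri {K x : ℕ} (hx : x ≤ K) : col (Tri K) x = K + 1 - x := by
  unfold col
  have he : (Tri K).filter (fun b => b.1 = x) = {x} ×ˢ Finset.range (K + 1 - x) := by
    ext ⟨b1, b2⟩
    simp only [Finset.mem_filter, Finset.mem_product, Finset.mem_singleton,
      Finset.mem_range, mem_tri]
    omega
  rw [he, Finset.card_product, Finset.card_singleton, Finset.card_range, one_mul]

lemma row_tri {K y : ℕ} (hy : y ≤ K) : row (Tri K) y = K + 1 - y := by
  unfold row
  have he : (Tri K).filter (fun b => b.2 = y) = Finset.range (K + 1 - y) ×ˢ {y} := by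
    ext ⟨b1, b2⟩
    simp only [Finset.mem_filter, Finset.mem_product, Finset.mem_singleton,
      Finset.mem_range, mem_tri]
    omega
  rw [he, Finset.card_product, Finset.card_singleton, Finset.card_range, mul_one]

end Stmt17

open Stmt17 in
/-- In `S_{2k-2}`, any two reduced words of the Grassmannian permutation
`π = [2,4,…,2k-2,1,3,…,2k-3]` are connected by Knuth moves: the reduced words of a
permutation avoiding both `321` and `2143` form a single Knuth equivalence class. -/
theorem stmt_17 (k : ℕ) (hk : 1 ≤ k) (π : Equiv.Perm (Fin (2 * k - 2)))
    (hπ₁ : ∀ i : Fin (2 * k - 2), (i : ℕ) < k - 1 → (π i : ℕ) = 2 * (i : ℕ) + 1)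
    (hπ₂ : ∀ i : Fin (2 * k - 2), k - 1 ≤ (i : ℕ) → (π i : ℕ) = 2 * ((i : ℕ) - (k - 1)))
    (l₁ l₂ : List {i : ℕ // i + 1 < 2 * k - 2})
    (h₁ : IsReducedWord (2 * k - 2) π l₁) (h₂ : IsReducedWord (2 * k - 2) π l₂) :
    Relation.ReflTransGen (KnuthMove (2 * k - 2)) l₁ l₂ := by
  rcases lt_or_ge k 2 with hk2 | hk2
  · have hnil : ∀ l : List {i : ℕ // i + 1 < 2 * k - 2}, l = [] := by
      intro l
      cases l with
      | nil => rfl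
      | cons a t => exact absurd a.2 (by omega)
    rw [hnil l₁, hnil l₂]
  · have hn : 2 * k - 2 = 2 * (k - 2) + 2 := by omega
    have hπPt : Pt (k - 2) (2 * k - 2) (Tri (k - 2)) π := by
      intro i
      constructor
      · intro hiK
        have h1 := hπ₁ i (by omega)
        rw [col_tri (by omega : (k - 2) - (i : ℕ) ≤ k - 2)]
        omega
      · intro hiK
        have h2 := hπ₂ i (by omega)
        have hlt := i.isLt
        rw [row_tri (by omega : (i : ℕ) - ((k - 2) + 1) ≤ k - 2)]
        omega
    obtain ⟨L₀, hL₀⟩ := exists_revext (Tri (k - 2))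
    obtain ⟨hPt₀, hinv₀⟩ := revext_facts hn hL₀ (tri_ideal _) (tri_bound _)
    have hu₀ : wordProd (2 * k - 2) (L₀.map (g (k - 2) (2 * k - 2) hn)) = π :=
      pt_unique hPt₀ hπPt
    have hπinv : inv (2 * k - 2) π = (Tri (k - 2)).card := by rw [← hu₀]; exact hinv₀
    have hlen₀ : (L₀.map (g (k - 2) (2 * k - 2) hn)).length = (Tri (k - 2)).card := by
      rw [List.length_map]; exact revext_length hL₀
    have key : ∀ l, IsReducedWord (2 * k - 2) π l →
        ∃ L, RevExt (Tri (k - 2)) L ∧ l = L.map (g (k - 2) (2 * k - 2) hn) := by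
      intro l hl
      have hle : l.length ≤ (Tri (k - 2)).card := by rw [← hlen₀]; exact hl.2 _ hu₀
      have hge : (Tri (k - 2)).card ≤ l.length := by
        rw [← hπinv, ← hl.1]; exact inv_wordProd_le l
      exact reconstruct hn l (Tri (k - 2)) (tri_ideal _) (tri_bound _)
        (by rw [hl.1]; exact hπPt) (by rw [hl.1, hπinv]; omega)
    obtain ⟨L₁, hL₁, e₁⟩ := key l₁ h₁
    obtain ⟨L₂, hL₂, e₂⟩ := key l₂ h₂
    rw [e₁, e₂]
    exact connectivity hn (Tri (k - 2)).card (Tri (k - 2)) rfl (tri_ideal _) (tri_bound _)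
      L₁ L₂ hL₁ hL₂
end
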